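/- Let G be a strongly regular graph with parameters (n, d, a, c). Then the 2-token graph F_2(G) has an equitable partition into two cells (pairs at distance 1 and pairs at distance 2) with quotient matrix [[2a, 2c],[2d−2a−2, 2d−2c]], and the adjacency spectral radius of F_2(G) equals d + (a−c) + √((d−(a−c))² − 4c). -/

import Mathlib

open Finset
open scoped Classical

def tokenGraph {V : Type*} [DecidableEq V] (G : SimpleGraph V) (k : ℕ) :
    SimpleGraph {s : Finset V // s.card = k} where
  Adj A B := ∃ a b, G.Adj a b ∧ A.1 \ B.1 = {a} ∧ B.1 \ A.1 = {b}
  symm := by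
    constructor
    rintro A B ⟨a, b, h, h1, h2⟩
    exact ⟨b, a, h.symm, h2, h1⟩
  loopless := by
    constructor
    rintro A ⟨a, b, h, h1, h2⟩
    rw [Finset.sdiff_self] at h1
    exact Finset.singleton_ne_empty a h1.symm

noncomputable def specRad {m : Type*} [Fintype m] (M : Matrix m m ℝ) : ℝ :=
  sSup {μ : ℝ | ∃ v : m → ℝ, v ≠ 0 ∧ M.mulVec v = μ • v}

/-! A neighbour of the pair `{u, v}` in `F₂(G)` is `{y, v}` with `y ~ u`, `y ≠ v`, or `{y, u}`
with `y ~ v`, `y ≠ u`, and it is an edge of `G` exactly when `y` is a common neighbour of `u` and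
`v`. Counting with the parameters of `G` shows that edges and non-edges form an equitable
partition of `F₂(G)` with quotient `Q = [[2a, 2d-2a-2], [2c, 2d-2c]]`. The larger root `r` of the
characteristic polynomial of `Q` has eigenvector `(2d-2a-2, r-2a)`, which is positive because
`a + 2 ≤ d` (look at a common neighbour of a non-adjacent pair). Lifted to `F₂(G)` it is a positive
eigenvector of a nonnegative matrix, and comparing any eigenvector with it at the coordinate
maximising the ratio of absolute values bounds every real eigenvalue by `r`. -/

open Matrix

section Perron

variable {m : Type*} [Fintype m] {M : Matrix m m ℝ} {w : m → ℝ} {r : ℝ}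

theorem abs_le_of_mulVec_eq_smul_of_pos_eigenvector (hM : ∀ i j, 0 ≤ M i j) (hw : ∀ i, 0 < w i)
    (hMw : M *ᵥ w = r • w) {v : m → ℝ} (hv : v ≠ 0) {μ : ℝ} (hMv : M *ᵥ v = μ • v) :
    |μ| ≤ r := by
  obtain ⟨k, hk⟩ := Function.ne_iff.mp hv
  obtain ⟨i, -, hi⟩ := exists_max_image univ (fun j => |v j| / w j) ⟨k, mem_univ k⟩
  set t := |v i| / w i
  have hvt : ∀ j, |v j| ≤ t * w j := fun j => (div_le_iff₀ (hw j)).mp (hi j (mem_univ j))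
  have hvi : t * w i = |v i| := div_mul_cancel₀ _ (hw i).ne'
  have ht : 0 < t := (div_pos (abs_pos.mpr hk) (hw k)).trans_le (hi k (mem_univ k))
  have key : |μ| * (t * w i) ≤ r * (t * w i) := calc
    |μ| * (t * w i) = |(M *ᵥ v) i| := by rw [hMv, hvi]; simp [abs_mul]
    _ ≤ ∑ j, M i j * |v j| := by
      simpa [mulVec, dotProduct, abs_mul, abs_of_nonneg (hM i _)] using
        abs_sum_le_sum_abs (fun j => M i j * v j) univ
    _ ≤ ∑ j, M i j * (t * w j) := sum_le_sum fun j _ => mul_le_mul_of_nonneg_left (hvt j) (hM i j)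
    _ = t * (M *ᵥ w) i := by
      simp only [mulVec, dotProduct, mul_sum]
      exact sum_congr rfl fun j _ => by ring
    _ = r * (t * w i) := by rw [hMw]; simp only [Pi.smul_apply, smul_eq_mul]; ring
  exact le_of_mul_le_mul_right key (mul_pos ht (hw i))

theorem specRad_eq_of_pos_eigenvector [Nonempty m] (hM : ∀ i j, 0 ≤ M i j) (hw : ∀ i, 0 < w i)
    (hMw : M *ᵥ w = r • w) : specRad M = r := by
  refine IsGreatest.csSup_eq ⟨⟨w, fun h => ?_, hMw⟩, fun μ ⟨v, hv, hMv⟩ => ?_⟩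
  · obtain ⟨i⟩ := ‹Nonempty m›
    exact (hw i).ne' (congrFun h i)
  · exact (le_abs_self μ).trans (abs_le_of_mulVec_eq_smul_of_pos_eigenvector hM hw hMw hv hMv)

end Perron

section QuotientRoot

variable {a c d r : ℝ}

theorem quotient_discrim_nonneg (hc : 0 ≤ c) (hda : a + 2 ≤ d) : 0 ≤ (d - (a - c)) ^ 2 - 4 * c := by
  nlinarith

theorem two_mul_lt_of_eq_add_sqrt (hc : 0 < c) (hda : a + 2 ≤ d)
    (hr : r = d + (a - c) + √((d - (a - c)) ^ 2 - 4 * c)) : 2 * a < r := by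
  have hs := Real.sq_sqrt (quotient_discrim_nonneg hc.le hda)
  have hs0 := Real.sqrt_nonneg ((d - (a - c)) ^ 2 - 4 * c)
  by_contra! hle
  have hsle : √((d - (a - c)) ^ 2 - 4 * c) ≤ a + c - d := by linarith
  nlinarith [mul_le_mul_of_nonneg_left hsle hs0]

theorem quotient_eigen_eq_of_eq_add_sqrt (hc : 0 ≤ c) (hda : a + 2 ≤ d)
    (hr : r = d + (a - c) + √((d - (a - c)) ^ 2 - 4 * c)) :
    2 * c * (2 * d - 2 * a - 2) + (2 * d - 2 * c) * (r - 2 * a) = r * (r - 2 * a) := by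
  have hs := Real.sq_sqrt (quotient_discrim_nonneg hc hda)
  subst hr
  linear_combination -hs

end QuotientRoot

namespace SimpleGraph

theorem adjMatrix_mulVec_ite {W α : Type*} [Fintype W] [NonAssocSemiring α] (H : SimpleGraph W)
    [DecidableRel H.Adj] (p : W → Prop) [DecidablePred p] (x y : α) (B : W) :
    (H.adjMatrix α *ᵥ fun B => if p B then x else y) B =
      #((H.neighborFinset B).filter p) * x + #((H.neighborFinset B).filter (¬ p ·)) * y := by
  rw [adjMatrix_mulVec_apply, sum_ite, sum_const, sum_const, nsmul_eq_mul, nsmul_eq_mul]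

variable {V : Type*} [DecidableEq V] (G : SimpleGraph V)

theorem tokenGraph_adj_iff {k : ℕ} (A B : {s : Finset V // #s = k}) :
    (tokenGraph G k).Adj A B ↔
      ∃ x ∈ A.1, ∃ y ∉ A.1, G.Adj x y ∧ B.1 = insert y (A.1.erase x) := by
  constructor
  · rintro ⟨x, y, hxy, hAB, hBA⟩
    have hx := Finset.ext_iff.mp hAB
    have hy := Finset.ext_iff.mp hBA
    simp only [mem_sdiff, mem_singleton] at hx hy
    refine ⟨x, ((hx x).mpr rfl).1, y, ((hy y).mpr rfl).2, hxy, ?_⟩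
    ext z
    simp only [mem_insert, mem_erase]
    grind
  · rintro ⟨x, hx, y, hy, hxy, hB⟩
    refine ⟨x, y, hxy, ?_, ?_⟩ <;> ext z <;>
      simp only [hB, mem_sdiff, mem_insert, mem_erase, mem_singleton] <;> grind

theorem tokenGraph_two_adj_pair_iff {u v : V} (huv : u ≠ v) (B : {s : Finset V // #s = 2}) :
    (tokenGraph G 2).Adj ⟨{u, v}, card_pair huv⟩ B ↔
      ∃ y, (G.Adj u y ∧ y ≠ v ∧ B.1 = {y, v}) ∨ (G.Adj v y ∧ y ≠ u ∧ B.1 = {y, u}) := by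
  rw [tokenGraph_adj_iff]
  constructor
  · rintro ⟨x, hx, y, hy, hxy, hB⟩
    dsimp only at hx hy hB
    simp only [mem_insert, mem_singleton, not_or] at hx hy
    rcases hx with rfl | rfl
    · exact ⟨y, .inl ⟨hxy, hy.2, by rw [hB]; grind⟩⟩
    · exact ⟨y, .inr ⟨hxy, hy.1, by rw [hB]; grind⟩⟩
  · rintro ⟨y, ⟨hy, hyv, hB⟩ | ⟨hy, hyu, hB⟩⟩
    · exact ⟨u, by simp, y, by simp [hy.ne', hyv], hy, by rw [hB]; grind⟩
    · exact ⟨v, by simp, y, by simp [hy.ne', hyu], hy, by rw [hB]; grind⟩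

theorem exists_adj_mem_pair_iff (x y : V) :
    (∃ p ∈ ({x, y} : Finset V), ∃ q ∈ ({x, y} : Finset V), G.Adj p q) ↔ G.Adj x y := by
  simp [G.adj_comm y x]

theorem exists_ne_not_adj_mem_pair_iff (x y : V) :
    (∃ p ∈ ({x, y} : Finset V), ∃ q ∈ ({x, y} : Finset V), p ≠ q ∧ ¬ G.Adj p q) ↔
      x ≠ y ∧ ¬ G.Adj x y := by
  simp [G.adj_comm y x, eq_comm (a := y)]

theorem not_exists_adj_iff_exists_ne_not_adj {s : Finset V} (hs : #s = 2) :
    (¬ ∃ x ∈ s, ∃ y ∈ s, G.Adj x y) ↔ ∃ x ∈ s, ∃ y ∈ s, x ≠ y ∧ ¬ G.Adj x y := by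
  obtain ⟨x, y, hxy, rfl⟩ := card_eq_two.mp hs
  rw [exists_adj_mem_pair_iff, exists_ne_not_adj_mem_pair_iff, and_iff_right hxy]

variable [Fintype V]

theorem tokenGraph_two_neighborFinset_map_subtype {u v : V} (huv : u ≠ v) :
    ((tokenGraph G 2).neighborFinset ⟨{u, v}, card_pair huv⟩).map (Function.Embedding.subtype _) =
      ((G.neighborFinset u).erase v).image (fun y => {y, v}) ∪
        ((G.neighborFinset v).erase u).image (fun y => {y, u}) := by
  ext s
  simp only [mem_map, mem_neighborFinset, tokenGraph_two_adj_pair_iff G huv, mem_union, mem_image,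
    mem_erase, Function.Embedding.subtype_apply, Subtype.exists]
  constructor
  · rintro ⟨_, _, ⟨y, ⟨hy, hyv, rfl⟩ | ⟨hy, hyu, rfl⟩⟩, rfl⟩
    exacts [.inl ⟨y, ⟨hyv, hy⟩, rfl⟩, .inr ⟨y, ⟨hyu, hy⟩, rfl⟩]
  · rintro (⟨y, ⟨hyv, hy⟩, rfl⟩ | ⟨y, ⟨hyu, hy⟩, rfl⟩)
    exacts [⟨_, card_pair hyv, ⟨y, .inl ⟨hy, hyv, rfl⟩⟩, rfl⟩,
      ⟨_, card_pair hyu, ⟨y, .inr ⟨hy, hyu, rfl⟩⟩, rfl⟩]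

theorem card_filter_tokenGraph_two_neighborFinset {u v : V} (huv : u ≠ v)
    (P : Finset V → Prop) [DecidablePred P] :
    #(((tokenGraph G 2).neighborFinset ⟨{u, v}, card_pair huv⟩).filter fun B => P B.1) =
      #(((G.neighborFinset u).erase v).filter fun y => P {y, v}) +
        #(((G.neighborFinset v).erase u).filter fun y => P {y, u}) := by
  have hmap : ((((tokenGraph G 2).neighborFinset ⟨{u, v}, card_pair huv⟩).filter
      fun B => P B.1).map (Function.Embedding.subtype _)) =
      (((tokenGraph G 2).neighborFinset ⟨{u, v}, card_pair huv⟩).map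
        (Function.Embedding.subtype _)).filter P := by
    rw [filter_map]; rfl
  have hdisj : Disjoint (((G.neighborFinset u).erase v).image fun y => ({y, v} : Finset V))
      (((G.neighborFinset v).erase u).image fun y => ({y, u} : Finset V)) := by
    simp only [Finset.disjoint_left, mem_image, mem_erase, mem_neighborFinset]
    rintro _ ⟨y, ⟨-, hy⟩, rfl⟩ ⟨z, -, hz⟩
    have : u ∈ ({y, v} : Finset V) := hz ▸ mem_insert_of_mem (mem_singleton_self u)
    simp only [mem_insert, mem_singleton] at this
    exact this.elim hy.ne huv
  rw [← card_map, hmap, tokenGraph_two_neighborFinset_map_subtype G huv, filter_union,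
    card_union_of_disjoint (disjoint_filter_filter hdisj), filter_image, filter_image,
    card_image_of_injOn, card_image_of_injOn]
  all_goals
    intro y hy z _ hyz
    exact (insert_inj (by simpa using (mem_erase.mp (mem_filter.mp hy).1).1)).mp hyz

theorem card_filter_exists_adj_neighborFinset_tokenGraph {u v : V} (huv : u ≠ v) :
    #(((tokenGraph G 2).neighborFinset ⟨{u, v}, card_pair huv⟩).filter
        fun B => ∃ x ∈ B.1, ∃ y ∈ B.1, G.Adj x y) =
      #(((G.neighborFinset u).erase v).filter (G.Adj · v)) +
        #(((G.neighborFinset v).erase u).filter (G.Adj · u)) := by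
  rw [card_filter_tokenGraph_two_neighborFinset G huv fun s => ∃ x ∈ s, ∃ y ∈ s, G.Adj x y]
  simp only [exists_adj_mem_pair_iff]

theorem card_filter_exists_ne_not_adj_neighborFinset_tokenGraph {u v : V} (huv : u ≠ v) :
    #(((tokenGraph G 2).neighborFinset ⟨{u, v}, card_pair huv⟩).filter
        fun B => ∃ x ∈ B.1, ∃ y ∈ B.1, x ≠ y ∧ ¬ G.Adj x y) =
      #(((G.neighborFinset u).erase v).filter (¬ G.Adj · v)) +
        #(((G.neighborFinset v).erase u).filter (¬ G.Adj · u)) := by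
  rw [card_filter_tokenGraph_two_neighborFinset G huv
    fun s => ∃ x ∈ s, ∃ y ∈ s, x ≠ y ∧ ¬ G.Adj x y]
  simp only [exists_ne_not_adj_mem_pair_iff]
  congr 1 <;> exact congrArg card (filter_congr fun y hy => and_iff_right (ne_of_mem_erase hy))

theorem card_filter_adj_erase_neighborFinset (u v : V) :
    #(((G.neighborFinset u).erase v).filter (G.Adj · v)) = Fintype.card (G.commonNeighbors u v) :=
  (Fintype.card_of_subtype _ fun w => by
    simpa [mem_commonNeighbors, G.adj_comm v w, and_comm] using fun hwv _ => hwv.ne).symm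

variable {G} {n d a c : ℕ}

theorem IsSRGWith.card_filter_adj_erase_of_adj (hsrg : G.IsSRGWith n d a c) {u v : V}
    (h : G.Adj u v) : #(((G.neighborFinset u).erase v).filter (G.Adj · v)) = a := by
  rw [card_filter_adj_erase_neighborFinset, hsrg.of_adj u v h]

theorem IsSRGWith.card_filter_adj_erase_of_not_adj (hsrg : G.IsSRGWith n d a c) {u v : V}
    (huv : u ≠ v) (h : ¬ G.Adj u v) : #(((G.neighborFinset u).erase v).filter (G.Adj · v)) = c := by
  rw [card_filter_adj_erase_neighborFinset, hsrg.of_not_adj huv h]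

theorem IsSRGWith.card_filter_not_adj_erase_add_of_adj (hsrg : G.IsSRGWith n d a c) {u v : V}
    (h : G.Adj u v) : #(((G.neighborFinset u).erase v).filter (¬ G.Adj · v)) + a + 1 = d := by
  rw [← hsrg.card_filter_adj_erase_of_adj h, add_comm _ (#_), card_filter_add_card_filter_not,
    card_erase_add_one (G.mem_neighborFinset u v |>.mpr h), card_neighborFinset_eq_degree,
    hsrg.regular u]

theorem IsSRGWith.card_filter_not_adj_erase_add_of_not_adj (hsrg : G.IsSRGWith n d a c)
    {u v : V} (huv : u ≠ v) (h : ¬ G.Adj u v) :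
    #(((G.neighborFinset u).erase v).filter (¬ G.Adj · v)) + c = d := by
  rw [← hsrg.card_filter_adj_erase_of_not_adj huv h, add_comm, card_filter_add_card_filter_not,
    erase_eq_of_notMem (G.mem_neighborFinset u v |>.not.mpr h), card_neighborFinset_eq_degree,
    hsrg.regular u]

theorem IsSRGWith.card_filter_exists_adj_neighborFinset_tokenGraph_of_adj
    (hsrg : G.IsSRGWith n d a c) {u v : V} (h : G.Adj u v) :
    #(((tokenGraph G 2).neighborFinset ⟨{u, v}, card_pair h.ne⟩).filter
        fun B => ∃ x ∈ B.1, ∃ y ∈ B.1, G.Adj x y) = 2 * a := by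
  rw [card_filter_exists_adj_neighborFinset_tokenGraph G h.ne, hsrg.card_filter_adj_erase_of_adj h,
    hsrg.card_filter_adj_erase_of_adj h.symm, two_mul]

theorem IsSRGWith.card_filter_exists_adj_neighborFinset_tokenGraph_of_not_adj
    (hsrg : G.IsSRGWith n d a c) {u v : V} (huv : u ≠ v) (h : ¬ G.Adj u v) :
    #(((tokenGraph G 2).neighborFinset ⟨{u, v}, card_pair huv⟩).filter
        fun B => ∃ x ∈ B.1, ∃ y ∈ B.1, G.Adj x y) = 2 * c := by
  rw [card_filter_exists_adj_neighborFinset_tokenGraph G huv,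
    hsrg.card_filter_adj_erase_of_not_adj huv h,
    hsrg.card_filter_adj_erase_of_not_adj huv.symm (h ∘ Adj.symm), two_mul]

theorem IsSRGWith.card_filter_exists_ne_not_adj_neighborFinset_tokenGraph_add_of_adj
    (hsrg : G.IsSRGWith n d a c) {u v : V} (h : G.Adj u v) :
    #(((tokenGraph G 2).neighborFinset ⟨{u, v}, card_pair h.ne⟩).filter
        fun B => ∃ x ∈ B.1, ∃ y ∈ B.1, x ≠ y ∧ ¬ G.Adj x y) + 2 * a + 2 = 2 * d := by
  have hu := hsrg.card_filter_not_adj_erase_add_of_adj h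
  have hv := hsrg.card_filter_not_adj_erase_add_of_adj h.symm
  rw [card_filter_exists_ne_not_adj_neighborFinset_tokenGraph G h.ne]
  omega

theorem IsSRGWith.card_filter_exists_ne_not_adj_neighborFinset_tokenGraph_add_of_not_adj
    (hsrg : G.IsSRGWith n d a c) {u v : V} (huv : u ≠ v) (h : ¬ G.Adj u v) :
    #(((tokenGraph G 2).neighborFinset ⟨{u, v}, card_pair huv⟩).filter
        fun B => ∃ x ∈ B.1, ∃ y ∈ B.1, x ≠ y ∧ ¬ G.Adj x y) + 2 * c = 2 * d := by
  have hu := hsrg.card_filter_not_adj_erase_add_of_not_adj huv h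
  have hv := hsrg.card_filter_not_adj_erase_add_of_not_adj huv.symm (h ∘ Adj.symm)
  rw [card_filter_exists_ne_not_adj_neighborFinset_tokenGraph G huv]
  omega

theorem IsSRGWith.add_two_le_of_not_adj (hsrg : G.IsSRGWith n d a c) (hc : 1 ≤ c) {u v : V}
    (huv : u ≠ v) (h : ¬ G.Adj u v) : a + 2 ≤ d := by
  obtain ⟨⟨w, hwu, hwv⟩⟩ := Fintype.card_pos_iff.mp ((hsrg.of_not_adj huv h).symm ▸ hc)
  have hv : v ∈ ((G.neighborFinset w).erase u).filter (¬ G.Adj · u) := by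
    simpa [huv.symm, hwv.symm, G.adj_comm v u] using h
  have hd := hsrg.card_filter_not_adj_erase_add_of_adj hwu.symm
  have hpos := card_pos.mpr ⟨v, hv⟩
  omega

theorem IsSRGWith.adjMatrix_tokenGraph_two_mulVec (hsrg : G.IsSRGWith n d a c) {r α β : ℝ}
    (hadj : 2 * a * α + (2 * d - 2 * a - 2) * β = r * α)
    (hnonadj : 2 * c * α + (2 * d - 2 * c) * β = r * β) :
    (tokenGraph G 2).adjMatrix ℝ *ᵥ
        (fun B => if ∃ x ∈ B.1, ∃ y ∈ B.1, G.Adj x y then α else β) =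
      r • fun B => if ∃ x ∈ B.1, ∃ y ∈ B.1, G.Adj x y then α else β := by
  ext ⟨s, hs⟩
  obtain ⟨u, v, huv, rfl⟩ := card_eq_two.mp hs
  rw [adjMatrix_mulVec_ite, Pi.smul_apply, smul_eq_mul,
    filter_congr fun B _ => not_exists_adj_iff_exists_ne_not_adj G B.2]
  by_cases h : G.Adj u v
  · have hE := hsrg.card_filter_exists_adj_neighborFinset_tokenGraph_of_adj h
    have hN := hsrg.card_filter_exists_ne_not_adj_neighborFinset_tokenGraph_add_of_adj h
    rw [if_pos ((exists_adj_mem_pair_iff G u v).mpr h), hE]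
    rify at hN
    push_cast
    linear_combination hadj + β * hN
  · have hE := hsrg.card_filter_exists_adj_neighborFinset_tokenGraph_of_not_adj huv h
    have hN := hsrg.card_filter_exists_ne_not_adj_neighborFinset_tokenGraph_add_of_not_adj huv h
    rw [if_neg ((exists_adj_mem_pair_iff G u v).not.mpr h), hE]
    rify at hN
    push_cast
    linear_combination hnonadj + β * hN

end SimpleGraph

theorem srg_two_token_quotient_and_radius_general {V : Type*} [Fintype V] [DecidableEq V]
    (G : SimpleGraph V) (n d a c : ℕ)
    (hsrg : G.IsSRGWith n d a c) (hc1 : 1 ≤ c)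
    (hnc : ∃ u v : V, u ≠ v ∧ ¬ G.Adj u v) :
    (∀ (u v : V) (h : G.Adj u v),
      (((tokenGraph G 2).neighborFinset ⟨{u, v}, Finset.card_pair h.ne⟩).filter
        (fun B => ∃ x ∈ B.1, ∃ y ∈ B.1, G.Adj x y)).card = 2 * a ∧
      (((tokenGraph G 2).neighborFinset ⟨{u, v}, Finset.card_pair h.ne⟩).filter
        (fun B => ∃ x ∈ B.1, ∃ y ∈ B.1, x ≠ y ∧ ¬ G.Adj x y)).card = 2 * d - 2 * a - 2) ∧
    (∀ (u v : V) (hne : u ≠ v), ¬ G.Adj u v →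
      (((tokenGraph G 2).neighborFinset ⟨{u, v}, Finset.card_pair hne⟩).filter
        (fun B => ∃ x ∈ B.1, ∃ y ∈ B.1, G.Adj x y)).card = 2 * c ∧
      (((tokenGraph G 2).neighborFinset ⟨{u, v}, Finset.card_pair hne⟩).filter
        (fun B => ∃ x ∈ B.1, ∃ y ∈ B.1, x ≠ y ∧ ¬ G.Adj x y)).card = 2 * d - 2 * c) ∧
    specRad ((tokenGraph G 2).adjMatrix ℝ) =
      (d : ℝ) + ((a : ℝ) - (c : ℝ)) +
        Real.sqrt (((d : ℝ) - ((a : ℝ) - (c : ℝ))) ^ 2 - 4 * (c : ℝ)) := by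
  refine ⟨fun u v h => ⟨hsrg.card_filter_exists_adj_neighborFinset_tokenGraph_of_adj h, ?_⟩,
    fun u v huv h => ⟨hsrg.card_filter_exists_adj_neighborFinset_tokenGraph_of_not_adj huv h, ?_⟩,
    ?_⟩
  · have := hsrg.card_filter_exists_ne_not_adj_neighborFinset_tokenGraph_add_of_adj h
    omega
  · have := hsrg.card_filter_exists_ne_not_adj_neighborFinset_tokenGraph_add_of_not_adj huv h
    omega
  obtain ⟨u, v, huv, h⟩ := hnc
  have : Nonempty {s : Finset V // #s = 2} := ⟨⟨{u, v}, card_pair huv⟩⟩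
  have hda : (a : ℝ) + 2 ≤ d := by exact_mod_cast hsrg.add_two_le_of_not_adj hc1 huv h
  have hc : (0 : ℝ) < c := by exact_mod_cast hc1
  set r := (d : ℝ) + ((a : ℝ) - (c : ℝ)) +
    Real.sqrt (((d : ℝ) - ((a : ℝ) - (c : ℝ))) ^ 2 - 4 * (c : ℝ)) with hr
  have hra := two_mul_lt_of_eq_add_sqrt hc hda hr
  refine specRad_eq_of_pos_eigenvector (fun B B' => ?_) (fun B => ?_)
    (hsrg.adjMatrix_tokenGraph_two_mulVec (α := 2 * d - 2 * a - 2) (β := r - 2 * a) (by ring)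
      (quotient_eigen_eq_of_eq_add_sqrt hc.le hda hr))
  · rw [SimpleGraph.adjMatrix_apply]
    split_ifs <;> norm_num
  · split_ifs <;> linarith

theorem srg_two_token_quotient_and_radius {V : Type*} [Fintype V] [DecidableEq V]
    (G : SimpleGraph V) (n d a c : ℕ)
    (hsrg : G.IsSRGWith n d a c) (hconn : G.Connected) (hc1 : 1 ≤ c)
    (hnc : ∃ u v : V, u ≠ v ∧ ¬ G.Adj u v) :
    (∀ (u v : V) (h : G.Adj u v),
      (((tokenGraph G 2).neighborFinset ⟨{u, v}, Finset.card_pair h.ne⟩).filter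
        (fun B => ∃ x ∈ B.1, ∃ y ∈ B.1, G.Adj x y)).card = 2 * a ∧
      (((tokenGraph G 2).neighborFinset ⟨{u, v}, Finset.card_pair h.ne⟩).filter
        (fun B => ∃ x ∈ B.1, ∃ y ∈ B.1, x ≠ y ∧ ¬ G.Adj x y)).card = 2 * d - 2 * a - 2) ∧
    (∀ (u v : V) (hne : u ≠ v), ¬ G.Adj u v →
      (((tokenGraph G 2).neighborFinset ⟨{u, v}, Finset.card_pair hne⟩).filter
        (fun B => ∃ x ∈ B.1, ∃ y ∈ B.1, G.Adj x y)).card = 2 * c ∧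
      (((tokenGraph G 2).neighborFinset ⟨{u, v}, Finset.card_pair hne⟩).filter
        (fun B => ∃ x ∈ B.1, ∃ y ∈ B.1, x ≠ y ∧ ¬ G.Adj x y)).card = 2 * d - 2 * c) ∧
    specRad ((tokenGraph G 2).adjMatrix ℝ) =
      (d : ℝ) + ((a : ℝ) - (c : ℝ)) +
        Real.sqrt (((d : ℝ) - ((a : ℝ) - (c : ℝ))) ^ 2 - 4 * (c : ℝ)) :=
  srg_two_token_quotient_and_radius_general G n d a c hsrg hc1 hnc
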